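/- arXiv:2505.01633 — 6 statements merged into one kernel-verified Lean document; each statement's English description precedes it below -/
import Mathlib

section
/- Let ν ≥ 1 be an integer, x a nonzero real number, and M := C(2ν−1, ν). Suppose r and f are formal power series in u with real coefficients such that r + M·u·r^ν = x (the constant series x) and ν²·u²·f'' + ν(ν+1)·u·f' + 1/2 = r²/(2x²), where f', f'' denote the first and second formal derivatives of f with respect to u. Then for every j ≥ 1, the coefficient of u^j in f equals (−M)^j · (νj−1)! / ( j! · ((ν−1)j+2)! ) · x^{(ν−1)j}. -/
/-!
The string equation `r + c·u·r^ν = x` has at most one power-series solution: the difference of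
two solutions is killed by a unit `1 + c·u·(…)`. A solution is `x·B(−c·x^(ν−1)·u)`, where
`B = Σ R_{ν,1}(n) uⁿ` is a Raney series: the Pascal-type recurrence
`R_{ν,k+1}(n+1) = R_{ν,k}(n+1) + R_{ν,k+ν}(n)` makes `k ↦ B_k = Σ R_{ν,k}(n) uⁿ` multiplicative,
so `B_k = B^k` and `B = 1 + u·B^ν`. Hence `[uʲ] r² = x²·(−c·x^(ν−1))ʲ·R_{ν,2}(j)`, and the Toda
operator multiplies `uʲ` by `νj(νj+1)`, which determines the coefficients of `f` for `j ≥ 1`.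
-/

open PowerSeries

section RaneySeries

variable (K : Type*) [Field K]

/-- The Raney number `k / (p n + k) * C(p n + k, n)`, taken to be `1` at `n = 0` even when
`k = 0`. -/
def raney (p k : ℕ) : ℕ → K
  | 0 => 1
  | n + 1 => k * ((p * (n + 1) + k).choose (n + 1) : K) / ((p * (n + 1) + k : ℕ) : K)

noncomputable def raneySeries (p k : ℕ) : K⟦X⟧ :=
  mk (raney K p k)

variable {K} {p : ℕ}

@[simp]
theorem coeff_raneySeries (k n : ℕ) : coeff n (raneySeries K p k) = raney K p k n :=
  coeff_mk _ _

@[simp]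
theorem constantCoeff_raneySeries (k : ℕ) : constantCoeff (raneySeries K p k) = 1 := by
  rw [← coeff_zero_eq_constantCoeff_apply, coeff_raneySeries, raney]

@[simp]
theorem raneySeries_zero : raneySeries K p 0 = 1 := by
  ext (_ | n) <;> simp [raney, coeff_one]

variable [CharZero K]

theorem raney_eq_div {k n : ℕ} (h : p * n + k ≠ 0) :
    raney K p k n = k * ((p * n + k).choose n : K) / ((p * n + k : ℕ) : K) := by
  cases n with
  | zero =>
    have hk : (k : K) ≠ 0 := by simpa using h
    simp [raney, hk]
  | succ n => rfl

theorem raney_succ_succ (hp : 1 ≤ p) (k n : ℕ) :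
    raney K p (k + 1) (n + 1) = raney K p k (n + 1) + raney K p (k + p) n := by
  set N := p * n + k + p with hNdef
  have hN1 : p * (n + 1) + (k + 1) = N + 1 := by ring
  have hN : p * (n + 1) + k = N := by ring
  have hN' : p * n + (k + p) = N := by ring
  have hn : n ≤ N := by nlinarith
  rw [raney_eq_div (by omega), raney_eq_div (by omega), raney_eq_div (by omega), hN1, hN, hN',
    Nat.choose_succ_succ]
  have hchoose : (N.choose (n + 1) : K) * (n + 1) = N.choose n * (N - n) := by
    rw [← Nat.cast_sub hn]; exact_mod_cast Nat.choose_succ_right_eq N n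
  have hN0 : (N : K) ≠ 0 := by exact_mod_cast (show N ≠ 0 by omega)
  field_simp
  rw [hNdef] at hchoose ⊢
  push_cast at hchoose ⊢
  linear_combination (p : K) * hchoose

theorem raney_two_eq (hp : 1 ≤ p) {n : ℕ} (hn : 1 ≤ n) :
    raney K p 2 n = 2 * (p * n) * (p * n + 1) * ((p * n - 1).factorial : K) /
      (n.factorial * ((p - 1) * n + 2).factorial) := by
  obtain ⟨t, ht⟩ : ∃ t, p * n = t + 1 := ⟨p * n - 1, by have := Nat.mul_le_mul hp hn; omega⟩
  have hsum : (p - 1) * n + 2 + n = t + 3 := by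
    rw [Nat.sub_one_mul]; have := Nat.le_mul_of_pos_left n hp; omega
  have hfact := Nat.add_choose_mul_factorial_mul_factorial ((p - 1) * n + 2) n
  rw [hsum, show (t + 3).factorial = (t + 3) * (t + 2) * (t + 1) * t.factorial by
    simp only [Nat.factorial_succ]; ring] at hfact
  have hcast : (p : K) * n = t + 1 := by exact_mod_cast ht
  rw [raney_eq_div (by omega), show p * n + 2 = t + 3 by omega, show p * n - 1 = t by omega,
    hcast, div_eq_div_iff (Nat.cast_ne_zero.2 (by omega))
      (mul_ne_zero (Nat.cast_ne_zero.2 n.factorial_ne_zero)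
        (Nat.cast_ne_zero.2 (Nat.factorial_ne_zero _)))]
  have hfactK := congrArg (Nat.cast (R := K)) hfact
  push_cast at hfactK ⊢
  linear_combination (2 : K) * hfactK

theorem raneySeries_succ (hp : 1 ≤ p) (k : ℕ) :
    raneySeries K p (k + 1) = raneySeries K p k + X * raneySeries K p (k + p) := by
  ext (_ | n)
  · simp [raney]
  · simp [coeff_succ_X_mul, raney_succ_succ hp]

theorem PowerSeries.eq_zero_of_forall_succ_eq_add_X_mul {R : Type*} [Semiring R]
    {D : ℕ → R⟦X⟧} (p : ℕ) (h0 : D 0 = 0) (hD : ∀ k, D (k + 1) = D k + X * D (k + p))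
    (k : ℕ) : D k = 0 := by
  ext n
  induction n generalizing k with
  | zero =>
    induction k with
    | zero => simp [h0]
    | succ k ih => simpa [hD] using ih
  | succ n ihn =>
    induction k with
    | zero => simp [h0]
    | succ k ih => simp [hD, coeff_succ_X_mul, ihn, ih]

theorem raneySeries_add (hp : 1 ≤ p) (k m : ℕ) :
    raneySeries K p (k + m) = raneySeries K p k * raneySeries K p m := by
  -- the defect `B_{k+m} - B_k B_m` obeys the recurrence of `raneySeries_succ` in `k`
  have h := eq_zero_of_forall_succ_eq_add_X_mul (D := fun k ↦
    raneySeries K p (k + m) - raneySeries K p k * raneySeries K p m) p (by simp)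
    (fun k ↦ by
      rw [show k + 1 + m = k + m + 1 by ring, raneySeries_succ hp, raneySeries_succ hp,
        show k + m + p = k + p + m by ring]
      ring) k
  exact sub_eq_zero.1 h

theorem raneySeries_eq_pow (hp : 1 ≤ p) (k : ℕ) :
    raneySeries K p k = raneySeries K p 1 ^ k := by
  induction k with
  | zero => simp
  | succ k ih => rw [raneySeries_add hp, ih, pow_succ]

theorem raneySeries_one (hp : 1 ≤ p) :
    raneySeries K p 1 = 1 + X * raneySeries K p 1 ^ p := by
  simpa [← raneySeries_eq_pow hp] using raneySeries_succ (K := K) hp 0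

end RaneySeries

namespace PowerSeries

theorem eq_of_add_C_mul_X_mul_pow_eq {R : Type*} [CommRing R] {c : R} {ν : ℕ} {r s : R⟦X⟧}
    (h : r + C c * X * r ^ ν = s + C c * X * s ^ ν) : r = s := by
  set g := ∑ i ∈ Finset.range ν, r ^ i * s ^ (ν - 1 - i)
  have hfactor : (r - s) * (1 + C c * X * g) = 0 := by
    linear_combination h + C c * X * geom_sum₂_mul r s ν
  have hunit : IsUnit (1 + C c * X * g) := isUnit_iff_constantCoeff.2 (by simp)
  exact sub_eq_zero.1 (hunit.mul_left_eq_zero.1 hfactor)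

theorem coeff_X_mul_derivative {R : Type*} [CommRing R] (f : R⟦X⟧) (n : ℕ) :
    coeff n (X * d⁄dX R f) = n * coeff n f := by
  rcases n with _ | n
  · simp
  · rw [coeff_succ_X_mul, coeff_derivative]; push_cast; ring

theorem coeff_X_sq_mul_derivative_derivative {R : Type*} [CommRing R] (f : R⟦X⟧) (n : ℕ) :
    coeff n (X ^ 2 * d⁄dX R (d⁄dX R f)) = n * (n - 1) * coeff n f := by
  rcases n with _ | _ | n
  · simp
  · simp [pow_two, mul_assoc, coeff_succ_X_mul]
  · rw [coeff_X_pow_mul', if_pos (by omega), show n + 2 - 2 = n by omega, coeff_derivative,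
      coeff_derivative]
    push_cast; ring

end PowerSeries

section StringEquation

variable {K : Type*} [Field K] [CharZero K] {ν : ℕ}

theorem add_C_mul_X_mul_pow_rescale_raneySeries (hν : 1 ≤ ν) (c x : K) :
    C x * rescale (-(c * x ^ (ν - 1))) (raneySeries K ν 1) +
      C c * X * (C x * rescale (-(c * x ^ (ν - 1))) (raneySeries K ν 1)) ^ ν = C x := by
  have hB := congrArg (rescale (-(c * x ^ (ν - 1)))) (raneySeries_one (K := K) hν)
  rw [map_add, map_one, map_mul, map_pow, rescale_X, map_neg, map_mul] at hB
  have hx : x ^ ν = x * x ^ (ν - 1) := by rw [← pow_succ', Nat.sub_add_cancel hν]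
  rw [mul_pow, ← map_pow, hx, map_mul]
  linear_combination C x * hB

theorem coeff_sq_of_add_C_mul_X_mul_pow_eq (hν : 1 ≤ ν) {c x : K} {r : K⟦X⟧}
    (hr : r + C c * X * r ^ ν = C x) (n : ℕ) :
    coeff n (r ^ 2) = x ^ 2 * (-(c * x ^ (ν - 1))) ^ n * raney K ν 2 n := by
  obtain rfl := eq_of_add_C_mul_X_mul_pow_eq
    (hr.trans (add_C_mul_X_mul_pow_rescale_raneySeries hν c x).symm)
  rw [mul_pow, ← map_pow, ← map_pow, ← raneySeries_eq_pow hν, coeff_C_mul, coeff_rescale,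
    coeff_raneySeries, mul_assoc]

end StringEquation

/-- If `r ∈ ℝ⟦u⟧` satisfies the string equation `r + C(2ν−1,ν)·u·r^ν = x`
(`x ≠ 0`) and `f ∈ ℝ⟦u⟧` satisfies the Toda-type relation
`ν²u²f'' + ν(ν+1)uf' + 1/2 = r²/(2x²)` (formal derivatives in `u`), then for every `j ≥ 1`
the coefficient of `u^j` in `f` equals `(−C(2ν−1,ν))^j·(νj−1)!/(j!·((ν−1)j+2)!)·x^{(ν−1)j}`. -/
theorem genus_zero_free_energy_coeffs
    (ν : ℕ) (hν : 1 ≤ ν) (x : ℝ) (hx : x ≠ 0)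
    (r f : PowerSeries ℝ)
    (hr : r + PowerSeries.C (R := ℝ) ((2 * ν - 1).choose ν : ℝ) * PowerSeries.X * r ^ ν
        = PowerSeries.C (R := ℝ) x)
    (hf : PowerSeries.C (R := ℝ) ((ν : ℝ) ^ 2) * PowerSeries.X ^ 2 *
            (PowerSeries.derivative ℝ (PowerSeries.derivative ℝ f))
        + PowerSeries.C (R := ℝ) ((ν : ℝ) * ((ν : ℝ) + 1)) * PowerSeries.X *
            (PowerSeries.derivative ℝ f)
        + PowerSeries.C (R := ℝ) (1 / 2)
        = PowerSeries.C (R := ℝ) (1 / (2 * x ^ 2)) * r ^ 2) :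
    ∀ j : ℕ, 1 ≤ j → PowerSeries.coeff (R := ℝ) j f =
      (-((2 * ν - 1).choose ν : ℝ)) ^ j * (Nat.factorial (ν * j - 1)) /
        (Nat.factorial j * Nat.factorial ((ν - 1) * j + 2)) * x ^ ((ν - 1) * j) := by
  intro j hj
  have hcoeff := congrArg (coeff j) hf
  rw [map_add, map_add, mul_assoc (C _), coeff_C_mul, coeff_X_sq_mul_derivative_derivative,
    mul_assoc (C _), coeff_C_mul, coeff_X_mul_derivative, coeff_C, if_neg (by omega),
    coeff_C_mul, coeff_sq_of_add_C_mul_X_mul_pow_eq hν hr, raney_two_eq hν hj] at hcoeff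
  have hνj : (ν : ℝ) * j * (ν * j + 1) ≠ 0 := by positivity
  apply mul_left_cancel₀ hνj
  calc (ν : ℝ) * j * (ν * j + 1) * coeff j f
      = ν ^ 2 * (j * (j - 1) * coeff j f) + ν * (ν + 1) * (j * coeff j f) + 0 := by ring
    _ = _ := hcoeff
    _ = _ := by rw [← neg_mul, mul_pow, ← pow_mul]; field_simp
end

section
/- Fix reals N > 0 and u > 0 and let w(ζ) := exp(−N(ζ²/2 + uζ⁶/6)). Let (P_n)_{n≥0} be a monic orthogonal family for w with squared norms h_n ≠ 0, recurrence coefficients R_n = h_n/h_{n−1}, and three-term recurrence ζP_n = P_{n+1} + R_nP_{n−1} (n ≥ 1), ζP_0 = P_1. Assume the integration-by-parts identity ∫_ℝ p'(ζ)w(ζ)dζ = N·∫_ℝ p(ζ)(ζ + uζ⁵)w(ζ)dζ holds for every polynomial p. Then for every n ≥ 3 the hexic string (Freud) equation holds: n/N = R_n · ( 1 + u·( R_{n+2}R_{n+1} + R_{n+1}² + 2R_nR_{n+1} + R_n² + 2R_nR_{n−1} + R_{n+1}R_{n−1} + R_{n−1}² + R_{n−1}R_{n−2} ) ). -/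
open MeasureTheory Polynomial

/-!
Apply the integration-by-parts identity to `p = P_n P_{n-1}`. By orthogonality only the leading
term `n ζ^{n-1}` of `P_n'` survives on the left, giving `n h_{n-1}`. On the right,
`∫ ζ P_n P_{n-1} w = R_n h_{n-1}`, and `∫ ζ⁵ P_n P_{n-1} w` is obtained by expanding `ζ³ P_n` and
`ζ² P_{n-1}` in the basis `(P_k)` with the three-term recurrence and pairing the two expansions;
the norms that appear are reduced to `h_{n-1}` by `h_{k+1} = R_{k+1} h_k`, itself a consequence
of the recurrence and orthogonality. Nothing about `w` enters beyond the linear functional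
`p ↦ ∫ p w`.
-/

structure IsMonicOrthogonalFamily {K : Type*} [CommRing K] (L : K[X] →ₗ[K] K) (P : ℕ → K[X]) :
    Prop where
  monic : ∀ n, (P n).Monic
  natDegree_eq : ∀ n, (P n).natDegree = n
  orthogonal : ∀ (n : ℕ) (q : K[X]), q.degree < n → L (q * P n) = 0

def IsThreeTermRecurrence {K : Type*} [CommRing K] (P : ℕ → K[X]) (R : ℕ → K) : Prop :=
  ∀ n, X * P (n + 1) = P (n + 2) + C (R (n + 1)) * P n

variable {K : Type*} [CommRing K] {L : K[X] →ₗ[K] K} {P : ℕ → K[X]} {R : ℕ → K}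

theorem X_sq_mul_eq_of_recurrence
    (hrec : IsThreeTermRecurrence P R) (n : ℕ) :
    X ^ 2 * P (n + 2) =
      P (n + 4) + C (R (n + 3) + R (n + 2)) * P (n + 2) + C (R (n + 2) * R (n + 1)) * P n := by
  simp only [map_add, map_mul]
  linear_combination X * hrec (n + 1) + hrec (n + 2) + C (R (n + 2)) * hrec n

theorem X_pow_three_mul_eq_of_recurrence
    (hrec : IsThreeTermRecurrence P R) (n : ℕ) :
    X ^ 3 * P (n + 3) =
      P (n + 6) + C (R (n + 5) + R (n + 4) + R (n + 3)) * P (n + 4) +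
        C (R (n + 3) * (R (n + 4) + R (n + 3) + R (n + 2))) * P (n + 2) +
          C (R (n + 3) * R (n + 2) * R (n + 1)) * P n := by
  have hsq := X_sq_mul_eq_of_recurrence hrec (n + 1)
  simp only [add_assoc, Nat.reduceAdd, map_add, map_mul] at hsq ⊢
  linear_combination X * hsq + hrec (n + 4) + (C (R (n + 4)) + C (R (n + 3))) * hrec (n + 2) +
    C (R (n + 3)) * C (R (n + 2)) * hrec n

namespace IsMonicOrthogonalFamily

theorem degree_le (hP : IsMonicOrthogonalFamily L P) (n : ℕ) : (P n).degree ≤ n :=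
  (hP.natDegree_eq n).le |> degree_le_of_natDegree_le

theorem coeff_self (hP : IsMonicOrthogonalFamily L P) (n : ℕ) : (P n).coeff n = 1 := by
  simpa [hP.natDegree_eq] using (hP.monic n).coeff_natDegree

theorem apply_mul_eq_coeff_mul (hP : IsMonicOrthogonalFamily L P) {n : ℕ} {q : K[X]}
    (hq : q.degree ≤ n) : L (q * P n) = q.coeff n * L (P n * P n) := by
  have hlt : (q - C (q.coeff n) * P n).degree < n := by
    refine degree_lt_iff_coeff_zero _ _ |>.mpr fun m hm => ?_
    rw [coeff_sub, coeff_C_mul]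
    rcases hm.eq_or_lt with rfl | hm
    · rw [hP.coeff_self, mul_one, sub_self]
    · have hm : (n : WithBot ℕ) < m := WithBot.coe_lt_coe.mpr hm
      rw [coeff_eq_zero_of_degree_lt (hq.trans_lt hm),
        coeff_eq_zero_of_degree_lt ((hP.degree_le n).trans_lt hm), mul_zero, sub_zero]
  have := hP.orthogonal n _ hlt
  rwa [sub_mul, map_sub, mul_assoc, C_mul', map_smul, smul_eq_mul, sub_eq_zero] at this

theorem apply_mul_eq_zero_of_ne (hP : IsMonicOrthogonalFamily L P) {i j : ℕ}
    (hij : i ≠ j) : L (P i * P j) = 0 := by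
  wlog hlt : i < j generalizing i j
  · rw [mul_comm]; exact this hij.symm (by omega)
  exact hP.orthogonal j _ ((hP.degree_le i).trans_lt (by exact_mod_cast hlt))

theorem apply_X_mul_mul
    (hP : IsMonicOrthogonalFamily L P)
    (hrec : IsThreeTermRecurrence P R) (n : ℕ) :
    L (X * (P (n + 1) * P n)) = R (n + 1) * L (P n * P n) := by
  rw [← mul_assoc, hrec, add_mul, map_add, mul_assoc, C_mul', map_smul,
    smul_eq_mul, hP.apply_mul_eq_zero_of_ne (by omega), zero_add]

theorem apply_succ_mul_self (hP : IsMonicOrthogonalFamily L P)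
    (hrec : IsThreeTermRecurrence P R) (n : ℕ) :
    L (P (n + 1) * P (n + 1)) = R (n + 1) * L (P n * P n) := by
  have hXP : (X * P n).degree ≤ ((n + 1 : ℕ) : WithBot ℕ) := by
    refine (degree_mul_le _ _).trans ((add_le_add degree_X_le (hP.degree_le n)).trans ?_)
    rw [add_comm]; rfl
  have hcoeff : (X * P n).coeff (n + 1) = 1 := by rw [coeff_X_mul, hP.coeff_self]
  rw [← hP.apply_X_mul_mul hrec, ← one_mul (L (P (n + 1) * P (n + 1))), ← hcoeff,
    ← hP.apply_mul_eq_coeff_mul hXP, mul_comm (P (n + 1)), mul_assoc]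

theorem apply_derivative_mul (hP : IsMonicOrthogonalFamily L P) (n : ℕ) :
    L (derivative (P (n + 1) * P n)) = (n + 1) * L (P n * P n) := by
  have hd : (derivative (P (n + 1))).degree ≤ n := by
    refine degree_le_of_natDegree_le <| natDegree_derivative_le _ |>.trans ?_
    rw [hP.natDegree_eq]; omega
  have hd' : (derivative (P n)).degree < (n + 1 : ℕ) :=
    degree_derivative_le.trans_lt ((hP.degree_le n).trans_lt (by exact_mod_cast n.lt_succ_self))
  rw [derivative_mul, map_add, hP.apply_mul_eq_coeff_mul hd, coeff_derivative, mul_comm (P (n + 1)),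
    hP.orthogonal _ _ hd', add_zero, hP.coeff_self]
  ring

theorem apply_mul_of_orthogonal_expansions (hP : IsMonicOrthogonalFamily L P) (n : ℕ)
    (a b c d e : K) :
    L ((P (n + 6) + C a * P (n + 4) + C b * P (n + 2) + C c * P n) *
        (P (n + 4) + C d * P (n + 2) + C e * P n)) =
      a * L (P (n + 4) * P (n + 4)) + b * d * L (P (n + 2) * P (n + 2)) +
        c * e * L (P n * P n) := by
  simp (disch := omega) only [C_mul', add_mul, mul_add, smul_mul_assoc, mul_smul_comm, map_add,
    map_smul, smul_eq_mul, hP.apply_mul_eq_zero_of_ne, mul_zero]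
  ring

theorem apply_X_pow_five_mul_mul (hP : IsMonicOrthogonalFamily L P)
    (hrec : IsThreeTermRecurrence P R) (n : ℕ) :
    L (X ^ 5 * (P (n + 3) * P (n + 2))) =
      R (n + 3) * (R (n + 5) * R (n + 4) + R (n + 4) ^ 2 + 2 * R (n + 3) * R (n + 4) +
        R (n + 3) ^ 2 + 2 * R (n + 3) * R (n + 2) + R (n + 4) * R (n + 2) + R (n + 2) ^ 2 +
        R (n + 2) * R (n + 1)) * L (P (n + 2) * P (n + 2)) := by
  have hsplit : X ^ 5 * (P (n + 3) * P (n + 2)) = X ^ 3 * P (n + 3) * (X ^ 2 * P (n + 2)) := by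
    ring
  have h4 := hP.apply_succ_mul_self hrec (n + 3)
  have h3 := hP.apply_succ_mul_self hrec (n + 2)
  have h2 := hP.apply_succ_mul_self hrec (n + 1)
  have h1 := hP.apply_succ_mul_self hrec n
  simp only [add_assoc, Nat.reduceAdd] at h4 h3 h2
  rw [hsplit, X_pow_three_mul_eq_of_recurrence hrec, X_sq_mul_eq_of_recurrence hrec,
    hP.apply_mul_of_orthogonal_expansions]
  linear_combination (R (n + 5) + R (n + 4) + R (n + 3)) * (h4 + R (n + 4) * h3) -
    R (n + 3) * R (n + 2) * R (n + 1) * (h2 + R (n + 2) * h1)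

theorem hexic_string_equation_of_integration_by_parts (hP : IsMonicOrthogonalFamily L P)
    (hrec : IsThreeTermRecurrence P R) {N u : K}
    (hibp : ∀ p, L (derivative p) = N * L ((X + C u * X ^ 5) * p)) (n : ℕ) :
    (n + 3) * L (P (n + 2) * P (n + 2)) =
      N * R (n + 3) * (1 + u * (R (n + 5) * R (n + 4) + R (n + 4) ^ 2 +
        2 * R (n + 3) * R (n + 4) + R (n + 3) ^ 2 + 2 * R (n + 3) * R (n + 2) +
        R (n + 4) * R (n + 2) + R (n + 2) ^ 2 + R (n + 2) * R (n + 1))) *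
        L (P (n + 2) * P (n + 2)) := by
  have hV : (X + C u * X ^ 5) * (P (n + 3) * P (n + 2)) =
      X * (P (n + 3) * P (n + 2)) + u • (X ^ 5 * (P (n + 3) * P (n + 2))) := by
    rw [smul_eq_C_mul]; ring
  have h := hibp (P (n + 3) * P (n + 2))
  rw [hP.apply_derivative_mul, hV, map_add, map_smul, smul_eq_mul, hP.apply_X_mul_mul hrec,
    hP.apply_X_pow_five_mul_mul hrec] at h
  push_cast at h
  linear_combination h

end IsMonicOrthogonalFamily

noncomputable def weightedIntegral (w : ℝ → ℝ)
    (hw : ∀ p : ℝ[X], Integrable fun ζ => p.eval ζ * w ζ) : ℝ[X] →ₗ[ℝ] ℝ where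
  toFun p := ∫ ζ, p.eval ζ * w ζ
  map_add' p q := by simp only [eval_add, add_mul]; exact integral_add (hw p) (hw q)
  map_smul' c p := by simp only [eval_smul, smul_eq_mul, mul_assoc, integral_const_mul]; rfl

@[simp]
theorem weightedIntegral_apply (w : ℝ → ℝ) (hw : ∀ p : ℝ[X], Integrable fun ζ => p.eval ζ * w ζ)
    (p : ℝ[X]) : weightedIntegral w hw p = ∫ ζ, p.eval ζ * w ζ :=
  rfl

theorem hexic_string_equation_general
    (N u : ℝ) (hN : 0 < N)
    (w : ℝ → ℝ)
    (hint : ∀ (p : Polynomial ℝ) (m : ℕ), Integrable (fun ζ : ℝ => ζ ^ m * p.eval ζ * w ζ))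
    (P : ℕ → Polynomial ℝ)
    (hmonic : ∀ n, (P n).Monic)
    (hdeg : ∀ n, (P n).natDegree = n)
    (horth : ∀ n : ℕ, ∀ q : Polynomial ℝ, q.degree < (n : WithBot ℕ) →
      ∫ ζ : ℝ, q.eval ζ * (P n).eval ζ * w ζ = 0)
    (h : ℕ → ℝ)
    (hh : ∀ n, h n = ∫ ζ : ℝ, ((P n).eval ζ) ^ 2 * w ζ)
    (hne : ∀ n, h n ≠ 0)
    (R : ℕ → ℝ)
    (hrec : ∀ n, 1 ≤ n → Polynomial.X * P n = P (n + 1) + Polynomial.C (R n) * P (n - 1))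
    (hibp : ∀ p : Polynomial ℝ,
      ∫ ζ : ℝ, (Polynomial.derivative p).eval ζ * w ζ =
        N * ∫ ζ : ℝ, p.eval ζ * (ζ + u * ζ ^ 5) * w ζ) :
    ∀ n : ℕ, 3 ≤ n →
      (n : ℝ) / N = R n *
        (1 + u * (R (n + 2) * R (n + 1) + R (n + 1) ^ 2 + 2 * R n * R (n + 1) + R n ^ 2
          + 2 * R n * R (n - 1) + R (n + 1) * R (n - 1) + R (n - 1) ^ 2
          + R (n - 1) * R (n - 2))) := by
  intro n hn
  obtain ⟨k, rfl⟩ : ∃ k, n = k + 3 := ⟨n - 3, by omega⟩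
  set L := weightedIntegral w fun p => by simpa using hint p 0
  have hP : IsMonicOrthogonalFamily L P :=
    ⟨hmonic, hdeg, fun n q hq => by simpa [L, mul_assoc] using horth n q hq⟩
  have hibpL : ∀ p, L (derivative p) = N * L ((X + C u * X ^ 5) * p) := fun p => by
    simp only [L, weightedIntegral_apply, hibp, eval_mul, eval_add, eval_X, eval_C, eval_pow]
    congr 2 with ζ
    ring
  have hnorm : L (P (k + 2) * P (k + 2)) = h (k + 2) := by
    simp [L, hh, sq]
  have key := hP.hexic_string_equation_of_integration_by_parts (fun n => hrec (n + 1) n.succ_pos)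
    hibpL k
  rw [hnorm] at key
  rw [div_eq_iff hN.ne']
  push_cast
  linear_combination mul_right_cancel₀ (hne (k + 2)) key

/-- For the hexic weight `w(ζ) = exp(−N(ζ²/2 + uζ⁶/6))` (`N, u > 0`), a monic
orthogonal family `(P n)` with squared norms `h n ≠ 0`, recurrence coefficients
`R n = h n / h (n−1)` and three-term recurrence, assuming the integration-by-parts identity
`∫ p' w = N·∫ p(ζ)(ζ + uζ⁵) w`, the hexic string (Freud) equation holds for every `n ≥ 3`:
`n/N = R_n·(1 + u·(R_{n+2}R_{n+1} + R_{n+1}² + 2R_nR_{n+1} + R_n² + 2R_nR_{n−1}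
 + R_{n+1}R_{n−1} + R_{n−1}² + R_{n−1}R_{n−2}))`. -/
theorem hexic_string_equation
    (N u : ℝ) (hN : 0 < N) (hu : 0 < u)
    (w : ℝ → ℝ)
    (hw : ∀ ζ : ℝ, w ζ = Real.exp (-N * (ζ ^ 2 / 2 + u * ζ ^ 6 / 6)))
    (hint : ∀ (p : Polynomial ℝ) (m : ℕ), Integrable (fun ζ : ℝ => ζ ^ m * p.eval ζ * w ζ))
    (P : ℕ → Polynomial ℝ)
    (hmonic : ∀ n, (P n).Monic)
    (hdeg : ∀ n, (P n).natDegree = n)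
    (horth : ∀ n : ℕ, ∀ q : Polynomial ℝ, q.degree < (n : WithBot ℕ) →
      ∫ ζ : ℝ, q.eval ζ * (P n).eval ζ * w ζ = 0)
    (h : ℕ → ℝ)
    (hh : ∀ n, h n = ∫ ζ : ℝ, ((P n).eval ζ) ^ 2 * w ζ)
    (hne : ∀ n, h n ≠ 0)
    (R : ℕ → ℝ)
    (hR0 : R 0 = 0)
    (hR : ∀ n, 1 ≤ n → R n = h n / h (n - 1))
    (hrec : ∀ n, 1 ≤ n → Polynomial.X * P n = P (n + 1) + Polynomial.C (R n) * P (n - 1))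
    (hrec0 : Polynomial.X * P 0 = P 1)
    (hibp : ∀ p : Polynomial ℝ,
      ∫ ζ : ℝ, (Polynomial.derivative p).eval ζ * w ζ =
        N * ∫ ζ : ℝ, p.eval ζ * (ζ + u * ζ ^ 5) * w ζ) :
    ∀ n : ℕ, 3 ≤ n →
      (n : ℝ) / N = R n *
        (1 + u * (R (n + 2) * R (n + 1) + R (n + 1) ^ 2 + 2 * R n * R (n + 1) + R n ^ 2
          + 2 * R n * R (n - 1) + R (n + 1) * R (n - 1) + R (n - 1) ^ 2
          + R (n - 1) * R (n - 2))) :=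
  hexic_string_equation_general N u hN w hint P hmonic hdeg horth h hh hne R hrec hibp
end

section
/- Let (P_n)_{n≥0} be monic real polynomials with deg P_n = n satisfying the three-term recurrence X·P_n = P_{n+1} + R_n·P_{n−1} for n ≥ 1 and X·P_0 = P_1, where the R_n are real numbers. For n ≥ 3 let A_n denote the coefficient of P_{n−3} in the expansion of the derivative P_n' in the basis (P_k)_{k≥0}. Then for every n ≥ 3: n·R_{n−1} + A_n = A_{n+1} + (n−1)·R_n. -/
/-!
Monic polynomials with `deg P k = k` form a basis of the polynomial ring; write `[P k]` for its coordinate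
functionals. Differentiating `X * P n = P (n + 1) + R n * P (n - 1)` gives
`P n + X * P n' = P (n + 1)' + R n * P (n - 1)'`, and the identity is the `[P (n - 2)]`-coordinate
of this equation. Two facts evaluate it: the recurrence, read on coordinates, says
`[P (j + 1)] (X * p) = [P j] p + R (j + 2) * [P (j + 2)] p`; and the top coordinate
`[P (n - 1)] P n'` is the coefficient of `X ^ (n - 1)` in `P n'`, namely `n`.
-/

open Module Polynomial

namespace Polynomial

variable {R : Type*} [CommRing R] [IsDomain R] (P : ℕ → R[X]) (hP : ∀ n, IsMonicOfDegree (P n) n)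

def Sequence.ofIsMonicOfDegree : Sequence R where
  elems' := P
  degree_eq' n := by rw [degree_eq_natDegree (hP n).ne_zero, (hP n).natDegree_eq]

lemma Sequence.isUnit_leadingCoeff_ofIsMonicOfDegree (n : ℕ) :
    IsUnit (Sequence.ofIsMonicOfDegree P hP n).leadingCoeff := by
  simp [Sequence.ofIsMonicOfDegree, (hP n).leadingCoeff_eq]

noncomputable def monicBasis : Basis ℕ R R[X] :=
  (Sequence.ofIsMonicOfDegree P hP).basis (Sequence.isUnit_leadingCoeff_ofIsMonicOfDegree P hP)

@[simp]
lemma monicBasis_apply (n : ℕ) : monicBasis P hP n = P n :=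
  Sequence.basis_eq_self _ _ _

lemma monicBasis_coord_self (j k : ℕ) :
    (monicBasis P hP).coord j (P k) = if k = j then 1 else 0 := by
  rw [← monicBasis_apply P hP k, Basis.coord_apply, Basis.repr_self, Finsupp.single_apply]

lemma monicBasis_coord_sum {n j : ℕ} (hj : j < n) (a : ℕ → R) :
    (monicBasis P hP).coord j (∑ k ∈ Finset.range n, C (a k) * P k) = a j := by
  simp only [C_mul', map_sum, map_smul, monicBasis_coord_self, smul_eq_mul, mul_ite, mul_one,
    mul_zero, Finset.sum_ite_eq', Finset.mem_range, if_pos hj]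

lemma monicBasis_coord_of_natDegree_le {n : ℕ} {p : R[X]} (hp : p.natDegree ≤ n) :
    (monicBasis P hP).coord n p = p.coeff n := by
  have hmem : p ∈ Submodule.span R (P '' Set.Iic n) := by
    rw [show P = Sequence.ofIsMonicOfDegree P hP from rfl, Sequence.span_degreeLE _ fun i _ =>
      Sequence.isUnit_leadingCoeff_ofIsMonicOfDegree P hP i]
    exact mem_degreeLE.2 (degree_le_of_natDegree_le hp)
  refine LinearMap.eqOn_span' (g := lcoeff R n) ?_ hmem
  rintro _ ⟨k, hk, rfl⟩
  rw [monicBasis_coord_self, lcoeff_apply]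
  rcases (Set.mem_Iic.1 hk).lt_or_eq with hlt | rfl
  · rw [if_neg hlt.ne, coeff_eq_zero_of_natDegree_lt (by rwa [(hP k).natDegree_eq])]
  · rw [if_pos rfl, ((isMonicOfDegree_iff _ _).1 (hP k)).2]

lemma monicBasis_coord_derivative (n : ℕ) :
    (monicBasis P hP).coord n (derivative (P (n + 1))) = n + 1 := by
  have hle : (derivative (P (n + 1))).natDegree ≤ n :=
    (natDegree_derivative_le _).trans (by rw [(hP _).natDegree_eq]; simp)
  rw [monicBasis_coord_of_natDegree_le P hP hle, coeff_derivative,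
    ((isMonicOfDegree_iff _ _).1 (hP _)).2, one_mul]

lemma monicBasis_coord_X_mul (r : ℕ → R)
    (hrec : ∀ n, 1 ≤ n → X * P n = P (n + 1) + C (r n) * P (n - 1))
    (hrec0 : X * P 0 = P 1) (j : ℕ) (p : R[X]) :
    (monicBasis P hP).coord (j + 1) (X * p) =
      (monicBasis P hP).coord j p + r (j + 2) * (monicBasis P hP).coord (j + 2) p := by
  set b := monicBasis P hP
  suffices (b.coord (j + 1)).comp (LinearMap.mulLeft R X) = b.coord j + r (j + 2) • b.coord (j + 2)
    from LinearMap.congr_fun this p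
  refine b.ext fun k => ?_
  simp only [LinearMap.comp_apply, LinearMap.mulLeft_apply, LinearMap.add_apply,
    LinearMap.smul_apply, smul_eq_mul, b, monicBasis_apply]
  rcases k with _ | k
  · simp only [hrec0, monicBasis_coord_self]
    simp [eq_comm]
  · simp only [hrec (k + 1) k.succ_pos, Nat.add_sub_cancel, map_add, C_mul', map_smul,
      monicBasis_coord_self, smul_eq_mul]
    rcases eq_or_ne k (j + 1) with rfl | hk
    · simp
    · simp [hk]

end Polynomial

/-- For monic polynomials `(P n)` of degree `n` satisfying the three-term
recurrence `X·P_n = P_{n+1} + R_n·P_{n−1}` (`n ≥ 1`) and `X·P_0 = P_1`, if `c n k` denote the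
coefficients of the expansion of the derivative `P_n'` in the basis `(P_k)` (so
`P_n' = Σ_{k<n} c n k · P_k`, and `A_n = c n (n−3)`), then for every `n ≥ 3`:
`n·R_{n−1} + A_n = A_{n+1} + (n−1)·R_n`. -/
theorem derivative_expansion_identity
    (P : ℕ → Polynomial ℝ)
    (hmonic : ∀ n, (P n).Monic)
    (hdeg : ∀ n, (P n).natDegree = n)
    (R : ℕ → ℝ)
    (hrec : ∀ n, 1 ≤ n → Polynomial.X * P n = P (n + 1) + Polynomial.C (R n) * P (n - 1))
    (hrec0 : Polynomial.X * P 0 = P 1)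
    (c : ℕ → ℕ → ℝ)
    (hc : ∀ n, Polynomial.derivative (P n) = ∑ k ∈ Finset.range n, Polynomial.C (c n k) * P k) :
    ∀ n : ℕ, 3 ≤ n →
      (n : ℝ) * R (n - 1) + c n (n - 3) = c (n + 1) (n - 2) + ((n : ℝ) - 1) * R n := by
  intro n hn
  obtain ⟨m, rfl⟩ : ∃ m, n = m + 3 := ⟨n - 3, by omega⟩
  have hP : ∀ n, IsMonicOfDegree (P n) n := fun n => ⟨hdeg n, hmonic n⟩
  have hdiff : P (m + 3) + X * derivative (P (m + 3)) =
      derivative (P (m + 4)) + C (R (m + 3)) * derivative (P (m + 2)) := by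
    simpa [derivative_mul] using congrArg derivative (hrec (m + 3) (by omega))
  have hcoord := congrArg ((monicBasis P hP).coord (m + 1)) hdiff
  rw [map_add, map_add, C_mul', map_smul, monicBasis_coord_self,
    monicBasis_coord_X_mul P hP R hrec hrec0, monicBasis_coord_derivative,
    monicBasis_coord_derivative, hc (m + 3), hc (m + 4),
    monicBasis_coord_sum P hP (by omega), monicBasis_coord_sum P hP (by omega)] at hcoord
  simp only [if_neg (by omega : m + 3 ≠ m + 1)] at hcoord
  push_cast [smul_eq_mul, show m + 3 - 1 = m + 2 from rfl, show m + 3 + 1 = m + 4 from rfl]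
    at hcoord ⊢
  linarith
end

section
/- Fix u > 0 and let I ⊆ ℝ∖{0} be an open set. Let r₀ : I → ℝ be twice differentiable and satisfy the cubic equation r₀(x) + 10u·r₀(x)³ = x for all x ∈ I. Then for every x ∈ I one has r₀(x) ≠ 0, 3x − 2r₀(x) ≠ 0, and −5u·r₀(x)·( r₀'(x)² + 2r₀(x)r₀''(x) ) / ( 1 + 30u·r₀(x)² ) = r₀(x)·(9x − 10r₀(x))·(x − r₀(x)) / ( 2·(3x − 2r₀(x))⁴ ). -/
/-! Differentiating `r₀ + 10u·r₀³ = x` once and twice gives `r₀'·A = 1` and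
`r₀''·A + 60u·r₀·r₀'² = 0` with `A = 1 + 30u·r₀²`; the first forces `A ≠ 0`, so
`r₀' = 1/A` and `r₀'' = -60u·r₀/A³`. Since `x - r₀ = 10u·r₀³`, `3x - 2r₀ = r₀·A` and
`9x - 10r₀ = -r₀(1 - 90u·r₀²)`, both sides equal `-5u·r₀·(1 - 90u·r₀²)/A⁴`. -/

theorem HasDerivAt.eq_of_eqOn_of_isOpen {I : Set ℝ} {f g : ℝ → ℝ} {f' g' x : ℝ}
    (hI : IsOpen I) (hx : x ∈ I) (hfg : Set.EqOn f g I)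
    (hf : HasDerivAt f f' x) (hg : HasDerivAt g g' x) : f' = g' :=
  hf.unique (hg.congr_of_eventuallyEq (Filter.eventually_of_mem (hI.mem_nhds hx) hfg))

section HexicDerivatives

variable {u : ℝ} {I : Set ℝ} {r0 d1 d2 : ℝ → ℝ}

theorem hexic_deriv_mul_eq_one (hI : IsOpen I) (hd1 : ∀ x ∈ I, HasDerivAt r0 (d1 x) x)
    (hcubic : ∀ x ∈ I, r0 x + 10 * u * r0 x ^ 3 = x) :
    ∀ x ∈ I, d1 x * (1 + 30 * u * r0 x ^ 2) = 1 := by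
  intro x hx
  have hlhs : HasDerivAt (fun y => r0 y + 10 * u * r0 y ^ 3)
      (d1 x + 10 * u * (3 * r0 x ^ 2 * d1 x)) x :=
    (hd1 x hx).add (((hd1 x hx).pow 3).const_mul (10 * u))
  have := hlhs.eq_of_eqOn_of_isOpen hI hx (fun y hy => hcubic y hy) (hasDerivAt_id x)
  linear_combination this

theorem hexic_second_deriv_relation (hI : IsOpen I) (hd1 : ∀ x ∈ I, HasDerivAt r0 (d1 x) x)
    (hd2 : ∀ x ∈ I, HasDerivAt d1 (d2 x) x)
    (hfirst : ∀ x ∈ I, d1 x * (1 + 30 * u * r0 x ^ 2) = 1) :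
    ∀ x ∈ I, d2 x * (1 + 30 * u * r0 x ^ 2) + 60 * u * r0 x * d1 x ^ 2 = 0 := by
  intro x hx
  have hlhs : HasDerivAt (fun y => d1 y * (1 + 30 * u * r0 y ^ 2))
      (d2 x * (1 + 30 * u * r0 x ^ 2) + d1 x * (30 * u * (2 * r0 x * d1 x))) x :=
    ((hd2 x hx).mul ((((hd1 x hx).pow 2).const_mul (30 * u)).const_add 1)).congr_deriv
      (by simp only [Pi.pow_apply]; ring)
  have := hlhs.eq_of_eqOn_of_isOpen hI hx (fun y hy => hfirst y hy) (hasDerivAt_const x 1)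
  linear_combination this

end HexicDerivatives

theorem hexic_r2_eq_of_deriv_relations {u x r d1 d2 : ℝ} (hr : r ≠ 0)
    (hcubic : r + 10 * u * r ^ 3 = x) (hfirst : d1 * (1 + 30 * u * r ^ 2) = 1)
    (hsecond : d2 * (1 + 30 * u * r ^ 2) + 60 * u * r * d1 ^ 2 = 0) :
    -5 * u * r * (d1 ^ 2 + 2 * r * d2) / (1 + 30 * u * r ^ 2) =
      r * (9 * x - 10 * r) * (x - r) / (2 * (3 * x - 2 * r) ^ 4) := by
  have hA : 1 + 30 * u * r ^ 2 ≠ 0 := right_ne_zero_of_mul_eq_one hfirst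
  obtain rfl : d1 = (1 + 30 * u * r ^ 2)⁻¹ := eq_inv_of_mul_eq_one_left hfirst
  obtain rfl : d2 = -(60 * u * r) / (1 + 30 * u * r ^ 2) ^ 3 := by
    field_simp at hsecond ⊢
    linear_combination hsecond
  subst hcubic
  field_simp
  ring

theorem hexic_r2_closed_form_general
    (u : ℝ)
    (I : Set ℝ) (hIopen : IsOpen I) (hI0 : ∀ x ∈ I, x ≠ 0)
    (r0 d1 d2 : ℝ → ℝ)
    (hd1 : ∀ x ∈ I, HasDerivAt r0 (d1 x) x)
    (hd2 : ∀ x ∈ I, HasDerivAt d1 (d2 x) x)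
    (hcubic : ∀ x ∈ I, r0 x + 10 * u * r0 x ^ 3 = x) :
    ∀ x ∈ I, r0 x ≠ 0 ∧ 3 * x - 2 * r0 x ≠ 0 ∧
      -5 * u * r0 x * (d1 x ^ 2 + 2 * r0 x * d2 x) / (1 + 30 * u * r0 x ^ 2) =
        r0 x * (9 * x - 10 * r0 x) * (x - r0 x) / (2 * (3 * x - 2 * r0 x) ^ 4) := by
  have hfirst := hexic_deriv_mul_eq_one hIopen hd1 hcubic
  have hsecond := hexic_second_deriv_relation hIopen hd1 hd2 hfirst
  intro x hx
  have hr : r0 x ≠ 0 := fun h => hI0 x hx <| by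
    linear_combination -(hcubic x hx) + (1 + 10 * u * r0 x ^ 2) * h
  have hA : 1 + 30 * u * r0 x ^ 2 ≠ 0 := right_ne_zero_of_mul_eq_one (hfirst x hx)
  refine ⟨hr, ?_, hexic_r2_eq_of_deriv_relations hr (hcubic x hx) (hfirst x hx) (hsecond x hx)⟩
  have hfactor : 3 * x - 2 * r0 x = r0 x * (1 + 30 * u * r0 x ^ 2) := by
    linear_combination (-3) * hcubic x hx
  exact hfactor ▸ mul_ne_zero hr hA

/-- If `r₀` is twice differentiable on an open set `I ⊆ ℝ∖{0}` (with first and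
second derivatives `d1`, `d2`) and satisfies `r₀ + 10u·r₀³ = x` on `I` (`u > 0`), then on `I` one
has `r₀ ≠ 0`, `3x − 2r₀ ≠ 0`, and
`−5u·r₀·(r₀'² + 2r₀r₀'')/(1 + 30u·r₀²) = r₀·(9x − 10r₀)·(x − r₀)/(2(3x − 2r₀)⁴)`. -/
theorem hexic_r2_closed_form
    (u : ℝ) (hu : 0 < u)
    (I : Set ℝ) (hIopen : IsOpen I) (hI0 : ∀ x ∈ I, x ≠ 0)
    (r0 d1 d2 : ℝ → ℝ)
    (hd1 : ∀ x ∈ I, HasDerivAt r0 (d1 x) x)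
    (hd2 : ∀ x ∈ I, HasDerivAt d1 (d2 x) x)
    (hcubic : ∀ x ∈ I, r0 x + 10 * u * r0 x ^ 3 = x) :
    ∀ x ∈ I, r0 x ≠ 0 ∧ 3 * x - 2 * r0 x ≠ 0 ∧
      -5 * u * r0 x * (d1 x ^ 2 + 2 * r0 x * d2 x) / (1 + 30 * u * r0 x ^ 2) =
        r0 x * (9 * x - 10 * r0 x) * (x - r0 x) / (2 * (3 * x - 2 * r0 x) ^ 4) :=
  hexic_r2_closed_form_general u I hIopen hI0 r0 d1 d2 hd1 hd2 hcubic
end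

section
/- Let x be a nonzero real number and let r be a formal power series in u with real coefficients satisfying r + 10·u·r³ = x (the constant series x). Then the constant coefficient of 2·(3x − 2r)⁴ equals 2x⁴ ≠ 0, so s := r·(9x − 10r)·(x − r) · (2·(3x − 2r)⁴)⁻¹ is a well-defined formal power series, and for every j ≥ 1 the coefficient of u^j in s equals ((−10)^j/2)·x^{2j−1}·( 10·C(3j, j−2)·Σ_{k=0}^{j−2} (3)_k(2−j)_k/((3+2j)_k·k!)·(−2)^k + C(3j, j−1)·Σ_{k=0}^{j−1} (3)_k(1−j)_k/((2+2j)_k·k!)·(−2)^k ), with the conventions C(m, i) = 0 for i < 0 and an empty sum equal to 0. -/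
/-!
Put `w = x - r = 10 u r³`. Then `s = G(w)` for the rational function
`G(T) = T (x - T) (10 T - x) / (2 (x + 2T)⁴)`, whose Taylor coefficients are
`(-2)ᵐ m (6m² - 3m + 1) / (16 xᵐ⁺¹)`, while Lagrange inversion for `r = x - 10 u r³` gives the
coefficients of `wᵐ` through ternary Fuss–Catalan numbers. The resulting sum telescopes, via Pascal's
rule for `C(3j - 1, ·)`, into `∑ₘ 2ᵐ m (3m - 2)/2 · C(3j, j - m)`, and the two terminating
`₂F₁(…; -2)` sums expand term by term into exactly this sum, since
`C(N, n) (-n)ₖ / (N - n + 1)ₖ = (-1)ᵏ C(N, n - k)`.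
-/

open PowerSeries

/-- The Pochhammer symbol `(y)_k = y(y+1)⋯(y+k−1)` on `ℝ`. -/
noncomputable def realPoch (y : ℝ) (k : ℕ) : ℝ := (ascPochhammer ℝ k).eval y

open Nat

/-- The number of ordered forests of `m` ternary trees with `n` internal nodes,
`m / (3n + m) · C(3n + m, n)`: the first tree is a leaf or a node with three subtrees. -/
def ternaryForests : ℕ → ℕ → ℕ
  | _, 0 => 1
  | 0, _ + 1 => 0
  | m + 1, n + 1 => ternaryForests m (n + 1) + ternaryForests (m + 3) n
termination_by m n => (n, m)

@[simp] theorem ternaryForests_zero_right (m : ℕ) : ternaryForests m 0 = 1 := by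
  cases m <;> simp [ternaryForests]

@[simp] theorem ternaryForests_zero_succ (n : ℕ) : ternaryForests 0 (n + 1) = 0 := by
  simp [ternaryForests]

theorem ternaryForests_succ_succ (m n : ℕ) :
    ternaryForests (m + 1) (n + 1) = ternaryForests m (n + 1) + ternaryForests (m + 3) n := by
  rw [ternaryForests]

theorem ternaryForests_succ_one (m : ℕ) : ternaryForests (m + 1) 1 = m + 1 := by
  induction m with
  | zero => simp [ternaryForests_succ_succ 0 0]
  | succ m ih => rw [ternaryForests_succ_succ, ih, ternaryForests_zero_right]

theorem choose_three_mul_add_two_succ (n : ℕ) :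
    (3 * n + 2).choose (n + 1) = 2 * (3 * n + 2).choose n := by
  have h := Nat.choose_succ_right_eq (3 * n + 2) n
  rw [show 3 * n + 2 - n = 2 * (n + 1) by omega] at h
  exact Nat.eq_of_mul_eq_mul_right (Nat.succ_pos n) (by rw [h, Nat.succ_eq_add_one]; ring)

theorem ternaryForests_add_two_mul_choose (m n : ℕ) :
    ternaryForests (m + 1) (n + 1) + 2 * (3 * n + m + 3).choose n =
      (3 * n + m + 3).choose (n + 1) := by
  induction n generalizing m with
  | zero => simp [ternaryForests_succ_one]
  | succ n ihn =>
    induction m with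
    | zero =>
      rw [show 3 * (n + 1) + 0 + 3 = 3 * n + 5 + 1 by ring]
      have h : ternaryForests 3 (n + 1) + 2 * (3 * n + 5).choose n = (3 * n + 5).choose (n + 1) :=
        ihn 2
      have hd : (3 * n + 5).choose (n + 1 + 1) = 2 * (3 * n + 5).choose (n + 1) :=
        choose_three_mul_add_two_succ (n + 1)
      rw [ternaryForests_succ_succ 0, ternaryForests_zero_succ, Nat.choose_succ_succ',
        Nat.choose_succ_succ' (3 * n + 5) (n + 1)]
      simp only [Nat.zero_add]
      omega
    | succ m ihm =>
      rw [show 3 * (n + 1) + (m + 1) + 3 = 3 * n + m + 6 + 1 by ring]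
      have h : ternaryForests (m + 1 + 3) (n + 1) + 2 * (3 * n + m + 6).choose n =
          (3 * n + m + 6).choose (n + 1) :=
        ihn (m + 3)
      have ihm : ternaryForests (m + 1) (n + 1 + 1) + 2 * (3 * n + m + 6).choose (n + 1) =
          (3 * n + m + 6).choose (n + 1 + 1) := by
        rwa [show 3 * (n + 1) + m + 3 = 3 * n + m + 6 by ring] at ihm
      rw [ternaryForests_succ_succ (m + 1), Nat.choose_succ_succ',
        Nat.choose_succ_succ' (3 * n + m + 6) (n + 1)]
      omega

section LagrangeInversion

variable {R : Type*} [CommRing R] {a c : R} {r : R⟦X⟧}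

theorem coeff_pow_of_eq_C_add_C_mul_X_mul_pow_three (h : r = C a + C c * X * r ^ 3) (n m : ℕ) :
    coeff n (r ^ m) = c ^ n * a ^ (m + 2 * n) * ternaryForests m n := by
  induction n generalizing m with
  | zero =>
    have h0 : constantCoeff r = a := by rw [h]; simp
    simp [h0]
  | succ n ihn =>
    induction m with
    | zero => simp [coeff_one]
    | succ m ihm =>
      have hsplit : r ^ (m + 1) = C a * r ^ m + C c * (X * r ^ (m + 3)) := by
        linear_combination r ^ m * h
      rw [hsplit, map_add, coeff_C_mul, coeff_C_mul, coeff_succ_X_mul, ihm, ihn,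
        ternaryForests_succ_succ]
      push_cast
      ring

theorem coeff_C_sub_pow_of_eq_C_add_C_mul_X_mul_pow_three (h : r = C a + C c * X * r ^ 3)
    {m n : ℕ} (hmn : m ≤ n) :
    coeff n ((C a - r) ^ m) =
      (-1) ^ m * c ^ n * a ^ (2 * n + m) * ternaryForests (3 * m) (n - m) := by
  have hw : (C a - r) ^ m = X ^ m * (C ((-c) ^ m) * r ^ (3 * m)) := by
    rw [map_pow, map_neg, ← mul_assoc, ← mul_pow, pow_mul, ← mul_pow]
    congr 1
    linear_combination -h
  rw [hw, coeff_X_pow_mul', if_pos hmn, coeff_C_mul,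
    coeff_pow_of_eq_C_add_C_mul_X_mul_pow_three h, neg_pow,
    show 3 * m + 2 * (n - m) = 2 * n + m by omega]
  linear_combination (-1) ^ m * a ^ (2 * n + m) * (ternaryForests (3 * m) (n - m) : R) *
    (pow_mul_pow_sub c hmn)

end LagrangeInversion

theorem coeff_subst_eq_sum_range {R : Type*} [CommRing R] {b : R⟦X⟧} (hb : constantCoeff b = 0)
    (f : R⟦X⟧) (n : ℕ) :
    coeff n (f.subst b) = ∑ d ∈ Finset.range (n + 1), coeff d f * coeff n (b ^ d) := by
  rw [coeff_subst' (HasSubst.of_constantCoeff_zero' hb)]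
  refine finsum_eq_sum_of_support_subset _ fun d hd => ?_
  rw [Finset.coe_range, Set.mem_Iio, Nat.lt_succ_iff]
  by_contra! hnd
  have hXd : X ^ d ∣ b ^ d := pow_dvd_pow_of_dvd (X_dvd_iff.mpr hb) d
  exact hd (by simp [(X_pow_dvd_iff.mp hXd) n hnd])

theorem ternaryForests_three_mul_succ (m i : ℕ) :
    (ternaryForests (3 * m) (i + 1) : ℝ) =
      (3 * (m + i) + 2).choose (i + 1) - 2 * ((3 * (m + i) + 2).choose i : ℝ) := by
  cases m with
  | zero => simp [choose_three_mul_add_two_succ]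
  | succ k =>
    have h := ternaryForests_add_two_mul_choose (3 * k + 2) i
    rw [show 3 * (k + 1) = 3 * k + 2 + 1 by ring,
      show 3 * (k + 1 + i) + 2 = 3 * i + (3 * k + 2) + 3 by ring, ← h]
    push_cast
    ring

/-- The hypothesis says `A(y) (1 - 2y) = B(y) (1 + y)` for the generating functions of `α`, `β`;
this is the shape of the Lagrange–Bürmann formula for `y = v (1 + y)³`. -/
theorem sum_mul_ternaryForests_eq_sum_mul_choose (α β : ℕ → ℝ) (h0 : α 0 = β 0)
    (hrec : ∀ m, α (m + 1) - β (m + 1) = 2 * α m + β m) {j : ℕ} (hj : 1 ≤ j) :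
    ∑ m ∈ Finset.range (j + 1), α m * ternaryForests (3 * m) (j - m) =
      ∑ m ∈ Finset.range (j + 1), β m * (3 * j).choose (j - m) := by
  obtain ⟨n, rfl⟩ : ∃ n, j = n + 1 := ⟨j - 1, by omega⟩
  set D : ℕ → ℝ := fun m => (α m - β m) * (3 * n + 2).choose (n + 1 - m)
  have hterm : ∀ m ∈ Finset.range (n + 1),
      α m * ternaryForests (3 * m) (n + 1 - m) - β m * (3 * (n + 1)).choose (n + 1 - m) =
        D m - D (m + 1) := by
    intro m hm
    have hmn : m ≤ n := Nat.lt_succ_iff.mp (Finset.mem_range.mp hm)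
    rw [show n + 1 - m = n - m + 1 by omega, ternaryForests_three_mul_succ,
      show 3 * (n + 1) = 3 * n + 2 + 1 by ring, Nat.choose_succ_succ' (3 * n + 2) (n - m),
      Nat.add_sub_cancel' hmn]
    simp only [D, show n + 1 - (m + 1) = n - m by omega, show n + 1 - m = n - m + 1 by omega]
    push_cast
    linear_combination ((3 * n + 2).choose (n - m) : ℝ) * hrec m
  rw [← sub_eq_zero, ← Finset.sum_sub_distrib, Finset.sum_range_succ, Finset.sum_congr rfl hterm,
    Finset.sum_range_sub']
  simp [D, h0]

theorem realPoch_natCast_add_one (c k : ℕ) : realPoch (c + 1) k = k ! * (c + k).choose k := by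
  rw [realPoch, ← Nat.cast_add_one, ← ascPochhammer_eval_cast, ascPochhammer_nat_eq_ascFactorial,
    Nat.ascFactorial_eq_factorial_mul_choose]
  push_cast
  ring

theorem realPoch_neg_natCast (n k : ℕ) : realPoch (-n) k = (-1) ^ k * k ! * n.choose k := by
  rw [realPoch, ascPochhammer_eval_neg_eq_descPochhammer, descPochhammer_eval_eq_descFactorial,
    Nat.descFactorial_eq_factorial_mul_choose]
  push_cast
  ring

theorem realPoch_three (k : ℕ) : realPoch 3 k = k ! * ((k + 1) * (k + 2) / 2) := by
  have h := realPoch_natCast_add_one 2 k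
  rw [add_comm 2 k, Nat.choose_symm_add, Nat.cast_choose_two] at h
  norm_num at h
  rw [h]
  ring

theorem choose_mul_choose_eq_choose_sub_mul_choose {n c N k : ℕ} (hN : n + c = N) (hk : k ≤ n) :
    N.choose n * n.choose k = N.choose (n - k) * (c + k).choose k := by
  rw [← Nat.choose_symm hk, Nat.choose_mul (Nat.sub_le n k), show N - (n - k) = c + k by omega,
    show n - (n - k) = k by omega]

theorem choose_mul_realPoch_neg_div {n c N k : ℕ} (hN : n + c = N) (hk : k ≤ n) :
    N.choose n * realPoch (-n) k / realPoch (c + 1) k = (-1) ^ k * N.choose (n - k) := by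
  have h : (N.choose n * n.choose k : ℝ) = N.choose (n - k) * (c + k).choose k := by
    exact_mod_cast choose_mul_choose_eq_choose_sub_mul_choose hN hk
  have hc : (k ! * (c + k).choose k : ℝ) ≠ 0 := by
    have := Nat.choose_pos (Nat.le_add_left k c)
    positivity
  rw [realPoch_neg_natCast, realPoch_natCast_add_one, div_eq_iff hc]
  linear_combination (-1) ^ k * (k ! : ℝ) * h

theorem choose_mul_sum_realPoch {n c N : ℕ} (hN : n + c = N) :
    N.choose n * ∑ k ∈ Finset.range (n + 1),
        realPoch 3 k * realPoch (-n) k / (realPoch (c + 1) k * k !) * (-2) ^ k =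
      ∑ k ∈ Finset.range (n + 1), 2 ^ k * ((k + 1) * (k + 2) / 2) * (N.choose (n - k) : ℝ) := by
  rw [Finset.mul_sum]
  refine Finset.sum_congr rfl fun k hk => ?_
  have h := choose_mul_realPoch_neg_div hN (Nat.lt_succ_iff.mp (Finset.mem_range.mp hk))
  have hsign : ((-1) ^ k * (-2) ^ k : ℝ) = 2 ^ k := by rw [← mul_pow]; norm_num
  calc (N.choose n : ℝ) * (realPoch 3 k * realPoch (-n) k / (realPoch (c + 1) k * k !) * (-2) ^ k)
      = realPoch 3 k / k ! * (-2) ^ k * (N.choose n * realPoch (-n) k / realPoch (c + 1) k) := by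
        ring
    _ = 2 ^ k * ((k + 1) * (k + 2) / 2) * (N.choose (n - k) : ℝ) := by
        rw [h, realPoch_three, mul_div_cancel_left₀ _ (by positivity), ← hsign]
        ring

theorem hexic_bracket_eq_sum {j : ℕ} (hj : 1 ≤ j) :
    10 * (if 2 ≤ j then ((3 * j).choose (j - 2) : ℝ) else 0) *
        (∑ k ∈ Finset.range (j - 1), realPoch 3 k * realPoch (2 - (j : ℝ)) k /
            (realPoch (3 + 2 * (j : ℝ)) k * (Nat.factorial k : ℝ)) * (-2 : ℝ) ^ k)
      + ((3 * j).choose (j - 1) : ℝ) *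
        (∑ k ∈ Finset.range j, realPoch 3 k * realPoch (1 - (j : ℝ)) k /
            (realPoch (2 + 2 * (j : ℝ)) k * (Nat.factorial k : ℝ)) * (-2 : ℝ) ^ k) =
      ∑ m ∈ Finset.range (j + 1), 2 ^ m * m * (3 * m - 2) / 2 * ((3 * j).choose (j - m) : ℝ) := by
  obtain ⟨n, rfl⟩ : ∃ n, j = n + 1 := ⟨j - 1, by omega⟩
  set N := 3 * (n + 1)
  have hfirst : 10 * (if 2 ≤ n + 1 then (N.choose (n + 1 - 2) : ℝ) else 0) *
      (∑ k ∈ Finset.range (n + 1 - 1), realPoch 3 k * realPoch (2 - ((n + 1 : ℕ) : ℝ)) k /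
        (realPoch (3 + 2 * ((n + 1 : ℕ) : ℝ)) k * k !) * (-2 : ℝ) ^ k) =
      10 * ∑ k ∈ Finset.range n, 2 ^ k * ((k + 1) * (k + 2) / 2) * (N.choose (n - 1 - k) : ℝ) := by
    rcases n with _ | p
    · simp
    · rw [if_pos (by omega), show p + 1 + 1 - 2 = p by omega, Nat.add_sub_cancel, mul_assoc,
        show (2 : ℝ) - ((p + 1 + 1 : ℕ) : ℝ) = -(p : ℝ) by push_cast; ring,
        show (3 : ℝ) + 2 * ((p + 1 + 1 : ℕ) : ℝ) = ((2 * p + 6 : ℕ) : ℝ) + 1 by push_cast; ring,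
        choose_mul_sum_realPoch (by ring), Nat.add_sub_cancel]
  have hsecond : (N.choose (n + 1 - 1) : ℝ) *
      (∑ k ∈ Finset.range (n + 1), realPoch 3 k * realPoch (1 - ((n + 1 : ℕ) : ℝ)) k /
        (realPoch (2 + 2 * ((n + 1 : ℕ) : ℝ)) k * k !) * (-2 : ℝ) ^ k) =
      ∑ k ∈ Finset.range (n + 1), 2 ^ k * ((k + 1) * (k + 2) / 2) * (N.choose (n - k) : ℝ) := by
    rw [Nat.add_sub_cancel,
      show (1 : ℝ) - ((n + 1 : ℕ) : ℝ) = -(n : ℝ) by push_cast; ring,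
      show (2 : ℝ) + 2 * ((n + 1 : ℕ) : ℝ) = ((2 * n + 3 : ℕ) : ℝ) + 1 by push_cast; ring]
    exact choose_mul_sum_realPoch (by ring)
  have hshift : ∑ m ∈ Finset.range (n + 1), 5 * 2 ^ m * m * (m + 1) / 2 * (N.choose (n - m) : ℝ) =
      10 * ∑ k ∈ Finset.range n, 2 ^ k * ((k + 1) * (k + 2) / 2) * (N.choose (n - 1 - k) : ℝ) := by
    rw [Finset.sum_range_succ', Finset.mul_sum]
    simp only [Nat.cast_zero, mul_zero, zero_mul, zero_div, add_zero, Nat.sub_sub, add_comm 1]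
    refine Finset.sum_congr rfl fun k _ => ?_
    push_cast
    ring
  rw [hfirst, hsecond, ← hshift, ← Finset.sum_add_distrib, Finset.sum_range_succ' _ (n + 1)]
  simp only [Nat.cast_zero, mul_zero, zero_mul, zero_div, add_zero, Nat.add_sub_add_right]
  refine Finset.sum_congr rfl fun m _ => ?_
  push_cast
  ring

noncomputable def genusOneSeriesInW (x : ℝ) : ℝ⟦X⟧ :=
  mk fun m => (-2) ^ m * m * (6 * m ^ 2 - 3 * m + 1) / (16 * x ^ (m + 1))

theorem two_mul_C_add_two_mul_X_pow_four_mul_genusOneSeriesInW {x : ℝ} (hx : x ≠ 0) :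
    2 * (C x + 2 * X) ^ 4 * genusOneSeriesInW x = X * (C x - X) * (10 * X - C x) := by
  have hden : 2 * (C x + 2 * X) ^ 4 = C (2 * x ^ 4) + C (16 * x ^ 3) * X ^ 1 +
      C (48 * x ^ 2) * X ^ 2 + C (64 * x) * X ^ 3 + C 32 * X ^ 4 := by
    simp only [map_mul, map_pow, map_ofNat]; ring
  have hnum : X * (C x - X) * (10 * X - C x) =
      C (-x ^ 2) * X ^ 1 + C (11 * x) * X ^ 2 + C (-10) * X ^ 3 := by
    simp only [map_mul, map_pow, map_neg, map_ofNat]; ring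
  ext n
  rw [hden, hnum]
  simp only [add_mul, mul_assoc, map_add, coeff_C_mul, coeff_X_pow_mul', coeff_X_pow,
    genusOneSeriesInW, coeff_mk]
  match n with
  | 0 | 1 | 2 | 3 => norm_num <;> field_simp <;> ring
  | n + 4 =>
    simp only [show n + 4 - 1 = n + 3 by omega, show n + 4 - 2 = n + 2 by omega,
      show n + 4 - 3 = n + 1 by omega, Nat.add_sub_cancel, pow_succ, show n + 4 ≠ 1 by omega,
      show n + 4 ≠ 2 by omega, show n + 4 ≠ 3 by omega, ↓reduceIte]
    norm_num
    field_simp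
    ring

theorem constantCoeff_two_mul_pow_four {x : ℝ} {r : ℝ⟦X⟧} (hr : constantCoeff r = x) :
    constantCoeff (2 * (C (3 * x) - 2 * r) ^ 4) = 2 * x ^ 4 := by
  simp only [map_mul, map_ofNat, map_pow, map_sub, constantCoeff_C, hr]
  ring

theorem mul_inv_eq_subst_genusOneSeriesInW {x : ℝ} (hx : x ≠ 0) {r : ℝ⟦X⟧}
    (hr : constantCoeff r = x) :
    r * (C (9 * x) - 10 * r) * (C x - r) * (2 * (C (3 * x) - 2 * r) ^ 4)⁻¹ =
      (genusOneSeriesInW x).subst (C x - r) := by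
  have hw : HasSubst (C x - r) := HasSubst.of_constantCoeff_zero' (by simp [hr])
  have hden : constantCoeff (2 * (C (3 * x) - 2 * r) ^ 4) ≠ 0 := by
    rw [constantCoeff_two_mul_pow_four hr]
    positivity
  have key :=
    congrArg (substAlgHom hw) (two_mul_C_add_two_mul_X_pow_four_mul_genusOneSeriesInW hx)
  simp only [map_mul, map_pow, map_add, map_sub, map_ofNat, substAlgHom_X, coe_substAlgHom,
    subst_C, show (MvPowerSeries.C x : ℝ⟦X⟧) = C x from rfl] at key
  rw [eq_comm, eq_mul_inv_iff_mul_eq hden, map_mul C 9 x, map_mul C 3 x, map_ofNat, map_ofNat]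
  linear_combination key

/-- If `r ∈ ℝ⟦u⟧` satisfies `r + 10·u·r³ = x` with `x ≠ 0`, then the constant
coefficient of `2(3x − 2r)⁴` equals `2x⁴ ≠ 0`, so `s = r(9x − 10r)(x − r)·(2(3x − 2r)⁴)⁻¹` is a
well-defined power series, and for `j ≥ 1` its `u^j`-coefficient equals
`((−10)^j/2)·x^{2j−1}·(10·C(3j,j−2)·₂F₁(3,2−j;3+2j;−2) + C(3j,j−1)·₂F₁(3,1−j;2+2j;−2))`
(with terminating hypergeometric sums, `C(m,i) = 0` for `i < 0`, empty sums `= 0`). -/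
theorem hexic_r2_coeffs
    (x : ℝ) (hx : x ≠ 0) (r : PowerSeries ℝ)
    (hr : r + 10 * PowerSeries.X * r ^ 3 = PowerSeries.C x) :
    PowerSeries.coeff 0 (2 * (PowerSeries.C (3 * x) - 2 * r) ^ 4) = 2 * x ^ 4 ∧
    (2 * x ^ 4 : ℝ) ≠ 0 ∧
    ∀ j : ℕ, 1 ≤ j →
      PowerSeries.coeff j
        (r * (PowerSeries.C (9 * x) - 10 * r) * (PowerSeries.C x - r) *
          (2 * (PowerSeries.C (3 * x) - 2 * r) ^ 4)⁻¹) =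
      (-10 : ℝ) ^ j / 2 * x ^ (2 * j - 1) *
        (10 * (if 2 ≤ j then ((3 * j).choose (j - 2) : ℝ) else 0) *
            (∑ k ∈ Finset.range (j - 1),
              realPoch 3 k * realPoch (2 - (j : ℝ)) k /
                (realPoch (3 + 2 * (j : ℝ)) k * (Nat.factorial k : ℝ)) * (-2 : ℝ) ^ k)
          + ((3 * j).choose (j - 1) : ℝ) *
            (∑ k ∈ Finset.range j,
              realPoch 3 k * realPoch (1 - (j : ℝ)) k /
                (realPoch (2 + 2 * (j : ℝ)) k * (Nat.factorial k : ℝ)) * (-2 : ℝ) ^ k)) := by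
  have hr0 : constantCoeff r = x := by simpa using congrArg constantCoeff hr
  refine ⟨by rw [coeff_zero_eq_constantCoeff_apply, constantCoeff_two_mul_pow_four hr0],
    by positivity, fun j hj => ?_⟩
  have hrec : r = C x + C (-10) * X * r ^ 3 := by
    rw [map_neg, map_ofNat]
    linear_combination hr
  have htelescope := sum_mul_ternaryForests_eq_sum_mul_choose
    (fun m => 2 ^ m * m * (6 * m ^ 2 - 3 * m + 1) / 8) (fun m => 2 ^ m * m * (3 * m - 2) / 2)
    (by simp) (fun m => by push_cast; ring) hj
  rw [mul_inv_eq_subst_genusOneSeriesInW hx hr0, coeff_subst_eq_sum_range (by simp [hr0]),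
    hexic_bracket_eq_sum hj, ← htelescope, Finset.mul_sum]
  refine Finset.sum_congr rfl fun m hm => ?_
  have hmj : m ≤ j := Nat.lt_succ_iff.mp (Finset.mem_range.mp hm)
  have hpow : x ^ (2 * j + m) = x ^ (2 * j - 1) * x ^ (m + 1) := by
    rw [← pow_add]; congr 1; omega
  have hsign : ((-2) ^ m * (-1) ^ m : ℝ) = 2 ^ m := by rw [← mul_pow]; norm_num
  rw [genusOneSeriesInW, coeff_mk, coeff_C_sub_pow_of_eq_C_add_C_mul_X_mul_pow_three hrec hmj,
    hpow, ← hsign]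
  field_simp
  ring
end

section
/- Let ν ≥ 1 be an integer. In the multivariate polynomial ring ℚ[X_ℓ : ℓ ∈ ℤ], define T : ℕ → ℤ → ℚ[X_ℓ : ℓ ∈ ℤ] recursively by T(0, k) = 1 if k = 0 and T(0, k) = 0 otherwise, and T(m+1, k) = T(m, k−1) + X_{k+1}·T(m, k+1). Then: (a) evaluating T(2ν−1, −1) at X_ℓ = 1 for all ℓ gives the binomial coefficient C(2ν−1, ν); (b) T(2ν−1, −1) is a homogeneous polynomial of degree ν; (c) every variable X_ℓ occurring in T(2ν−1, −1) satisfies −ν+1 ≤ ℓ ≤ ν−1. -/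
/-!
Unwinding the recurrence, `freudT m k` is a sum over lattice paths of `m` unit steps from `0` to
`k`, in which a down step leaving height `j` carries the weight `X_j`. A path ending at
`k = m - 2n` has exactly `n` down steps, so `freudT m (m - 2n)` is homogeneous of degree `n`,
and setting all `X_ℓ = 1` counts these paths, giving `C(m, n)`. A down step leaving height `ℓ`
needs `|ℓ|` steps to get there and `|ℓ - 1 - k|` steps from `ℓ - 1` to `k`, which confines `ℓ`.
For `m = 2ν - 1`, `k = -1` this is `n = ν` and `1 - ν ≤ ℓ ≤ ν - 1`.
-/

/-- `T m k` encodes the coefficient of `P_{n+k}` in the expansion of `ζ^m·P_n` for polynomials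
satisfying the three-term recurrence `ζP_j = P_{j+1} + R_jP_{j−1}`, with the variable `X_ℓ`
standing for `R_{n+ℓ}`. -/
noncomputable def freudT : ℕ → ℤ → MvPolynomial ℤ ℚ
  | 0, k => if k = 0 then 1 else 0
  | m + 1, k => freudT m (k - 1) + MvPolynomial.X (k + 1) * freudT m (k + 1)

open MvPolynomial

theorem freudT_eq_zero_of_lt_natAbs {m : ℕ} {k : ℤ} (h : m < k.natAbs) : freudT m k = 0 := by
  induction m generalizing k with
  | zero => rw [freudT, if_neg (by omega)]
  | succ m ih => rw [freudT, ih (by omega), ih (by omega), mul_zero, add_zero]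

theorem natAbs_le_of_freudT_ne_zero {m : ℕ} {k : ℤ} (h : freudT m k ≠ 0) : k.natAbs ≤ m :=
  le_of_not_gt (mt freudT_eq_zero_of_lt_natAbs h)

theorem isHomogeneous_freudT {m n : ℕ} {k : ℤ} (hk : k = m - 2 * n) :
    (freudT m k).IsHomogeneous n := by
  induction m generalizing n k with
  | zero =>
    rw [freudT]
    split_ifs with h
    · obtain rfl : n = 0 := by omega
      exact isHomogeneous_one _ _
    · exact isHomogeneous_zero _ _ _
  | succ m ih =>
    rw [freudT]
    refine (ih (by omega)).add ?_
    cases n with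
    | zero =>
      rw [freudT_eq_zero_of_lt_natAbs (by omega), mul_zero]
      exact isHomogeneous_zero _ _ _
    | succ n =>
      rw [add_comm n]
      exact (isHomogeneous_X ℚ _).mul (ih (by omega))

theorem eval_one_freudT {m n : ℕ} {k : ℤ} (hk : k = m - 2 * n) :
    eval (fun _ => (1 : ℚ)) (freudT m k) = m.choose n := by
  induction m generalizing n k with
  | zero =>
    rw [freudT]
    split_ifs with h
    · obtain rfl : n = 0 := by omega
      simp
    · rw [Nat.choose_eq_zero_of_lt (by omega)]
      simp
  | succ m ih =>
    rw [freudT, map_add, map_mul, eval_X, one_mul]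
    cases n with
    | zero =>
      rw [ih (n := 0) (by omega), freudT_eq_zero_of_lt_natAbs (by omega), map_zero, add_zero]
      simp
    | succ n =>
      rw [ih (n := n + 1) (by omega), ih (n := n) (by omega), Nat.choose_succ_succ']
      push_cast
      ring

theorem bounds_of_mem_vars_freudT {m : ℕ} {k ℓ : ℤ} (hℓ : ℓ ∈ (freudT m k).vars) :
    k - m + 2 ≤ 2 * ℓ ∧ 2 * ℓ ≤ k + m := by
  induction m generalizing k with
  | zero =>
    rw [freudT] at hℓ
    split_ifs at hℓ <;> simp at hℓ
  | succ m ih =>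
    rw [freudT] at hℓ
    rcases Finset.mem_union.mp (vars_add_subset _ _ hℓ) with h | h
    · have := ih h
      omega
    · have hne : freudT m (k + 1) ≠ 0 := by
        rintro hz
        simp [hz] at h
      have hk := natAbs_le_of_freudT_ne_zero hne
      rcases Finset.mem_union.mp (vars_mul _ _ h) with h | h
      · rw [vars_X, Finset.mem_singleton] at h
        omega
      · have := ih h
        omega

/-- The Freud function `F_ν = freudT (2ν−1) (−1)`:
(a) evaluates to `C(2ν−1, ν)` at `X_ℓ = 1`;
(b) is homogeneous of degree `ν`;
(c) involves only variables `X_ℓ` with `−ν+1 ≤ ℓ ≤ ν−1`. -/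
theorem freud_function_properties (ν : ℕ) (hν : 1 ≤ ν) :
    MvPolynomial.eval (fun _ : ℤ => (1 : ℚ)) (freudT (2 * ν - 1) (-1))
        = ((2 * ν - 1).choose ν : ℚ) ∧
    (freudT (2 * ν - 1) (-1)).IsHomogeneous ν ∧
    ∀ ℓ ∈ (freudT (2 * ν - 1) (-1)).vars, -(ν : ℤ) + 1 ≤ ℓ ∧ ℓ ≤ (ν : ℤ) - 1 := by
  have hk : (-1 : ℤ) = ((2 * ν - 1 : ℕ) : ℤ) - 2 * ν := by omega
  refine ⟨eval_one_freudT hk, isHomogeneous_freudT hk, fun ℓ hℓ => ?_⟩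
  have := bounds_of_mem_vars_freudT hℓ
  omega
end
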